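/- For every (x,t) ∈ G* the sub-Laplacian of the Kaplan norm satisfies L N(x,t) = (3/N(x,t)) |∇_H N(x,t)|² − (1/N(x,t)³) ( (2n+2)|x|² + 2 Σ_{k=1}^m |J_k x|² ). -/

import Mathlib

open MeasureTheory Filter
open scoped BigOperators ENNReal NNReal

noncomputable section

/-- Points of the Métivier group `G = ℝ^{2n} × ℝ^m`. -/
abbrev GrpPt (n m : ℕ) := (Fin (2*n) → ℝ) × (Fin m → ℝ)

/-- Euclidean norm on `Fin k → ℝ`. -/
def e2norm {k : ℕ} (x : Fin k → ℝ) : ℝ := Real.sqrt (∑ i, (x i)^2)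

/-- Kaplan norm `N(x,t) = (|x|^4 + 16|t|^2)^(1/4)`. -/
def kN {n m : ℕ} (p : GrpPt n m) : ℝ := (e2norm p.1 ^ 4 + 16 * e2norm p.2 ^ 2) ^ ((1:ℝ)/4)

/-- Group multiplication of the Métivier group. -/
def gmul {n m : ℕ} (J : Fin m → Matrix (Fin (2*n)) (Fin (2*n)) ℝ) (p q : GrpPt n m) : GrpPt n m :=
  (p.1 + q.1, p.2 + q.2 + fun k => (1/2 : ℝ) * ∑ i, (J k).mulVec p.1 i * q.1 i)

/-- Horizontal left-invariant vector field `X_j`. -/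
def XD {n m : ℕ} (J : Fin m → Matrix (Fin (2*n)) (Fin (2*n)) ℝ)
    {E : Type*} [NormedAddCommGroup E] [NormedSpace ℝ E]
    (j : Fin (2*n)) (f : GrpPt n m → E) (p : GrpPt n m) : E :=
  fderiv ℝ f p (Pi.single j 1, 0)
    + (1/2 : ℝ) • ∑ k, ((J k).mulVec p.1 j) • fderiv ℝ f p (0, Pi.single k 1)

/-- Squared length of the horizontal gradient. -/
def gradSq {n m : ℕ} (J : Fin m → Matrix (Fin (2*n)) (Fin (2*n)) ℝ)
    (f : GrpPt n m → ℝ) (p : GrpPt n m) : ℝ := ∑ j, (XD J j f p)^2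

/-- Sub-Laplacian `L f = -∑ X_j (X_j f)`. -/
def LSub {n m : ℕ} (J : Fin m → Matrix (Fin (2*n)) (Fin (2*n)) ℝ)
    {E : Type*} [NormedAddCommGroup E] [NormedSpace ℝ E]
    (f : GrpPt n m → E) (p : GrpPt n m) : E := - ∑ j, XD J j (XD J j f) p

/-- Weight `w_α = exp (-N^α)`. -/
def wA {n m : ℕ} (α : ℝ) (p : GrpPt n m) : ℝ := Real.exp (-(kN p ^ α))

/-- Potential `V_α = -(1/4) |grad w_α|²/w_α² - (1/2) (L w_α)/w_α`. -/
def VA {n m : ℕ} (J : Fin m → Matrix (Fin (2*n)) (Fin (2*n)) ℝ) (α : ℝ) (p : GrpPt n m) : ℝ :=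
  -(1/4) * gradSq J (wA α) p / (wA α p)^2 - (1/2) * LSub J (wA α) p / wA α p

/-!
Write `ρ = N⁴ = |x|⁴ + 16|t|²`, a polynomial on `G`. Each `X_j` is the derivative along a
vector whose `x`-part is `e_j` and whose `t`-part is `(J_k x)_j / 2`, so it acts on polynomials
by the Leibniz rule: `X_j ρ = 4|x|² x_j + 16 ∑_k t_k (J_k x)_j`, and since the skew matrices
`J_k` have zero diagonal, `X_j (J_k x)_j = 0`, which leaves
`∑_j X_j² ρ = 8((n+1)|x|² + ∑_k |J_k x|²)`. On `G*` the second-order chain rule for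
`N = ρ^{1/4}` reads `X_j² N = X_j² ρ / (4N³) - 3 (X_j N)² / N`; summing over `j` gives the
formula.
-/

open Topology Matrix

@[fun_prop]
theorem Matrix.differentiable_mulVec {ι κ : Type*} [Fintype ι] [Fintype κ] (M : Matrix ι κ ℝ) :
    Differentiable ℝ (M *ᵥ ·) :=
  (LinearMap.toContinuousLinearMap (mulVecLin M)).differentiable

theorem Matrix.diag_eq_zero_of_transpose_eq_neg {ι : Type*} {M : Matrix ι ι ℝ} (h : Mᵀ = -M)
    (i : ι) : M i i = 0 := by
  have := congr_fun (congr_fun h i) i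
  rw [transpose_apply, neg_apply] at this
  linarith

theorem sum_sq_eq_zero_iff {ι : Type*} [Fintype ι] {x : ι → ℝ} : ∑ i, x i ^ 2 = 0 ↔ x = 0 :=
  (Finset.sum_eq_zero_iff_of_nonneg fun i _ => sq_nonneg (x i)).trans <| by simp [funext_iff]

theorem e2norm_sq {k : ℕ} (x : Fin k → ℝ) : e2norm x ^ 2 = ∑ i, x i ^ 2 :=
  Real.sq_sqrt (Finset.sum_nonneg fun i _ => sq_nonneg (x i))

namespace Metivier

variable {n m : ℕ} (J : Fin m → Matrix (Fin (2*n)) (Fin (2*n)) ℝ)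

def horizontalVector (j : Fin (2*n)) (p : GrpPt n m) : GrpPt n m :=
  (Pi.single j 1, fun k => (1/2 : ℝ) * (J k *ᵥ p.1) j)

theorem XD_eq_fderiv_apply {E : Type*} [NormedAddCommGroup E] [NormedSpace ℝ E]
    (j : Fin (2*n)) (f : GrpPt n m → E) (p : GrpPt n m) :
    XD J j f p = fderiv ℝ f p (horizontalVector J j p) := by
  have hsplit : horizontalVector J j p = (Pi.single j 1, 0)
      + ∑ k, ((1/2 : ℝ) * (J k *ᵥ p.1) j) • ((0 : Fin (2*n) → ℝ), Pi.single k (1 : ℝ)) := by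
    ext i <;>
      simp [horizontalVector, Prod.fst_sum, Prod.snd_sum, Finset.sum_apply, Pi.single_apply]
  rw [XD, hsplit, map_add, map_sum, Finset.smul_sum]
  simp only [map_smul, smul_smul]

variable {J} {j : Fin (2*n)} {p : GrpPt n m} {f g : GrpPt n m → ℝ}

theorem XD_congr {E : Type*} [NormedAddCommGroup E] [NormedSpace ℝ E] {f g : GrpPt n m → E}
    (h : f =ᶠ[𝓝 p] g) : XD J j f p = XD J j g p := by
  rw [XD_eq_fderiv_apply, XD_eq_fderiv_apply, h.fderiv_eq]

theorem XD_add (hf : DifferentiableAt ℝ f p) (hg : DifferentiableAt ℝ g p) :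
    XD J j (fun q => f q + g q) p = XD J j f p + XD J j g p := by
  simp only [XD_eq_fderiv_apply, fderiv_fun_add hf hg, _root_.add_apply]

theorem XD_mul (hf : DifferentiableAt ℝ f p) (hg : DifferentiableAt ℝ g p) :
    XD J j (fun q => f q * g q) p = f p * XD J j g p + XD J j f p * g p := by
  simp only [XD_eq_fderiv_apply, fderiv_fun_mul hf hg, _root_.add_apply,
    _root_.smul_apply, smul_eq_mul]
  ring

theorem XD_const_mul (c : ℝ) (hf : DifferentiableAt ℝ f p) :
    XD J j (fun q => c * f q) p = c * XD J j f p := by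
  simp only [XD_eq_fderiv_apply, fderiv_const_mul hf, _root_.smul_apply, smul_eq_mul]

theorem XD_sum {ι : Type*} (s : Finset ι) {F : ι → GrpPt n m → ℝ}
    (hF : ∀ i ∈ s, DifferentiableAt ℝ (F i) p) :
    XD J j (fun q => ∑ i ∈ s, F i q) p = ∑ i ∈ s, XD J j (F i) p := by
  simp only [XD_eq_fderiv_apply, fderiv_fun_sum hF, _root_.sum_apply]

theorem XD_pow (k : ℕ) (hf : DifferentiableAt ℝ f p) :
    XD J j (fun q => f q ^ k) p = k * f p ^ (k - 1) * XD J j f p := by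
  simp only [XD_eq_fderiv_apply, fderiv_fun_pow k hf, _root_.smul_apply, nsmul_eq_mul,
    smul_eq_mul]

theorem XD_rpow_const (s : ℝ) (hf : DifferentiableAt ℝ f p) (hp : f p ≠ 0) :
    XD J j (fun q => f q ^ s) p = s * f p ^ (s - 1) * XD J j f p := by
  simp only [XD_eq_fderiv_apply, (hf.hasFDerivAt.rpow_const (Or.inl hp)).fderiv,
    _root_.smul_apply, smul_eq_mul]

theorem XD_fst_apply (i : Fin (2*n)) :
    XD J j (fun q => q.1 i) p = (Pi.single j 1 : Fin (2*n) → ℝ) i := by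
  rw [XD_eq_fderiv_apply, fderiv_apply differentiableAt_fst i, fderiv_fst]
  simp [horizontalVector]

theorem XD_snd_apply (k : Fin m) : XD J j (fun q => q.2 k) p = 1/2 * (J k *ᵥ p.1) j := by
  rw [XD_eq_fderiv_apply, fderiv_apply differentiableAt_snd k, fderiv_snd]
  simp [horizontalVector]

theorem XD_XD_rpow {ρ : GrpPt n m → ℝ} (s : ℝ) (hρ : ∀ᶠ q in 𝓝 p, DifferentiableAt ℝ ρ q)
    (hXρ : DifferentiableAt ℝ (XD J j ρ) p) (hp : 0 < ρ p) :
    XD J j (XD J j fun q => ρ q ^ s) p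
      = s * ρ p ^ (s - 1) * XD J j (XD J j ρ) p
        + s * (s - 1) * ρ p ^ (s - 2) * XD J j ρ p ^ 2 := by
  have hρp : DifferentiableAt ℝ ρ p := hρ.self_of_nhds
  have hpos : ∀ᶠ q in 𝓝 p, 0 < ρ q := hρp.continuousAt.eventually (lt_mem_nhds hp)
  have hfirst : XD J j (fun q => ρ q ^ s) =ᶠ[𝓝 p] fun q => s * ρ q ^ (s - 1) * XD J j ρ q :=
    (hρ.and hpos).mono fun q hq => XD_rpow_const s hq.1 hq.2.ne'
  have hdiff : DifferentiableAt ℝ (fun q => ρ q ^ (s - 1)) p := hρp.rpow_const (Or.inl hp.ne')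
  rw [XD_congr hfirst, XD_mul (hdiff.const_mul s) hXρ, XD_const_mul s hdiff,
    XD_rpow_const _ hρp hp.ne', show s - 1 - 1 = s - 2 by ring]
  ring

theorem XD_mulVec_apply (k : Fin m) (i : Fin (2*n)) :
    XD J j (fun q => (J k *ᵥ q.1) i) p = J k i j := by
  simp (disch := intros; fun_prop) only [mulVec, dotProduct, XD_sum, XD_const_mul, XD_fst_apply]
  simp [Pi.single_apply]

theorem XD_sum_sq_fst : XD J j (fun q => ∑ i, q.1 i ^ 2) p = 2 * p.1 j := by
  simp (disch := intros; fun_prop) only [XD_sum, XD_pow, XD_fst_apply]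
  simp [Pi.single_apply]

theorem XD_sum_sq_snd :
    XD J j (fun q => ∑ k, q.2 k ^ 2) p = ∑ k, p.2 k * (J k *ᵥ p.1) j := by
  simp (disch := intros; fun_prop) only [XD_sum, XD_pow, XD_snd_apply]
  exact Finset.sum_congr rfl fun k _ => by ring

def kaplanGauge (q : GrpPt n m) : ℝ := (∑ i, q.1 i ^ 2) ^ 2 + 16 * ∑ k, q.2 k ^ 2

theorem differentiable_kaplanGauge : Differentiable ℝ (kaplanGauge : GrpPt n m → ℝ) := by
  unfold kaplanGauge
  fun_prop

theorem XD_kaplanGauge : XD J j kaplanGauge = fun p : GrpPt n m =>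
    4 * (∑ i, p.1 i ^ 2) * p.1 j + 16 * ∑ k, p.2 k * (J k *ᵥ p.1) j := by
  funext p
  unfold kaplanGauge
  simp (disch := fun_prop) only [XD_add, XD_const_mul, XD_pow, XD_sum_sq_fst, XD_sum_sq_snd]
  ring

theorem XD_XD_kaplanGauge (hdiag : ∀ k, J k j j = 0) :
    XD J j (XD J j kaplanGauge) p
      = 4 * ∑ i, p.1 i ^ 2 + 8 * p.1 j ^ 2 + 8 * ∑ k, (J k *ᵥ p.1) j ^ 2 := by
  rw [XD_kaplanGauge]
  simp (disch := fun_prop) only [XD_add, XD_const_mul, XD_mul, XD_sum_sq_fst, XD_fst_apply]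
  simp (disch := intros; fun_prop) only [XD_sum, XD_mul, XD_snd_apply, XD_mulVec_apply, hdiag]
  simp only [Pi.single_eq_same, Finset.mul_sum]
  ring_nf

theorem kN_eq_rpow : (kN : GrpPt n m → ℝ) = fun q => kaplanGauge q ^ (1/4 : ℝ) := by
  funext q
  rw [kN, kaplanGauge, ← e2norm_sq, ← e2norm_sq, ← pow_mul]

theorem kaplanGauge_pos {q : GrpPt n m} (hq : q ≠ 0) : 0 < kaplanGauge q := by
  have hx : 0 ≤ ∑ i, q.1 i ^ 2 := by positivity
  have ht : 0 ≤ ∑ k, q.2 k ^ 2 := by positivity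
  refine lt_of_le_of_ne (by unfold kaplanGauge; positivity) fun h => hq ?_
  rw [eq_comm, kaplanGauge] at h
  exact Prod.ext (sum_sq_eq_zero_iff.1 (by nlinarith)) (sum_sq_eq_zero_iff.1 (by nlinarith))

theorem XD_XD_kN (hp : p ≠ 0) :
    XD J j (XD J j kN) p
      = XD J j (XD J j kaplanGauge) p / (4 * kN p ^ 3) - 3 / kN p * XD J j kN p ^ 2 := by
  have hρ := kaplanGauge_pos hp
  have hXρ : DifferentiableAt ℝ (XD J j kaplanGauge) p := by
    rw [XD_kaplanGauge]
    fun_prop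
  rw [kN_eq_rpow]
  beta_reduce
  rw [XD_XD_rpow _ (.of_forall differentiable_kaplanGauge) hXρ hρ,
    XD_rpow_const _ (differentiable_kaplanGauge p) hρ.ne', Real.rpow_sub_one hρ.ne',
    Real.rpow_sub hρ, Real.rpow_two]
  have hρu : kaplanGauge p = (kaplanGauge p ^ (1/4 : ℝ)) ^ 4 := by
    rw [one_div, ← Nat.cast_ofNat, Real.rpow_inv_natCast_pow hρ.le four_ne_zero]
  have hu : 0 < kaplanGauge p ^ (1/4 : ℝ) := Real.rpow_pos_of_pos hρ _
  generalize kaplanGauge p ^ (1/4 : ℝ) = u at hρu hu ⊢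
  rw [hρu]
  field_simp
  ring

theorem sum_XD_XD_kaplanGauge (hdiag : ∀ k j, J k j j = 0) :
    ∑ j, XD J j (XD J j kaplanGauge) p
      = 8 * ((n + 1) * e2norm p.1 ^ 2 + ∑ k, e2norm (J k *ᵥ p.1) ^ 2) := by
  rw [Finset.sum_congr rfl fun j _ => XD_XD_kaplanGauge fun k => hdiag k j]
  simp only [Finset.sum_add_distrib, Finset.sum_const, ← Finset.mul_sum, Finset.card_univ,
    Fintype.card_fin, nsmul_eq_mul, e2norm_sq]
  rw [Finset.sum_comm]
  push_cast
  ring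

end Metivier

open Metivier

theorem subLaplacian_kaplan_general (n m : ℕ)
    (J : Fin m → Matrix (Fin (2*n)) (Fin (2*n)) ℝ)
    (hskew : ∀ k, (J k).transpose = -(J k)) :
    ∀ p : GrpPt n m, p ≠ 0 →
      LSub J kN p
        = (3 / kN p) * gradSq J kN p
          - (1 / kN p ^ 3) * ((2*(n:ℝ)+2) * e2norm p.1 ^ 2
              + 2 * ∑ k, e2norm ((J k).mulVec p.1) ^ 2) := by
  intro p hp
  have hN : 0 < kN p := by
    rw [kN_eq_rpow]
    exact Real.rpow_pos_of_pos (kaplanGauge_pos hp) _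
  have hdiag : ∀ k j, J k j j = 0 := fun k => Matrix.diag_eq_zero_of_transpose_eq_neg (hskew k)
  calc LSub J kN p
      = -∑ j, (XD J j (XD J j kaplanGauge) p / (4 * kN p ^ 3) - 3 / kN p * XD J j kN p ^ 2) := by
        simp only [LSub, XD_XD_kN hp]
    _ = 3 / kN p * gradSq J kN p - (∑ j, XD J j (XD J j kaplanGauge) p) / (4 * kN p ^ 3) := by
        rw [gradSq, Finset.sum_sub_distrib, ← Finset.sum_div, Finset.mul_sum]
        ring
    _ = _ := by
        rw [sum_XD_XD_kaplanGauge hdiag]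
        field_simp
        ring

/-- Formula for the sub-Laplacian of the Kaplan norm on `G*`. -/
theorem subLaplacian_kaplan (n m : ℕ) (hn : 1 ≤ n) (hm : 1 ≤ m)
    (J : Fin m → Matrix (Fin (2*n)) (Fin (2*n)) ℝ)
    (hskew : ∀ k, (J k).transpose = -(J k))
    (hMet : ∀ t : Fin m → ℝ, t ≠ 0 → IsUnit (∑ k, t k • J k)) :
    ∀ p : GrpPt n m, p ≠ 0 →
      LSub J kN p
        = (3 / kN p) * gradSq J kN p
          - (1 / kN p ^ 3) * ((2*(n:ℝ)+2) * e2norm p.1 ^ 2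
              + 2 * ∑ k, e2norm ((J k).mulVec p.1) ^ 2) :=
  subLaplacian_kaplan_general n m J hskew
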